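/- arXiv:1712.04374 — 2 statements merged into one kernel-verified Lean document; each statement's English description precedes it below -/
import Mathlib

section
/- Let G be a lattice-ordered group, I a nonempty set, (x_i)_{i∈I} a family in G admitting a supremum, and a ∈ G. Then the family (a ∧ x_i)_{i∈I} admits a supremum, and a ∧ (sup_{i∈I} x_i) = sup_{i∈I} (a ∧ x_i). -/
/-! The identity `a ⊓ y + a ⊔ y = a + y` turns an upper bound `b` of the `a ⊓ y` into the bound
`y + a ≤ b + a ⊔ s` for every `y ≤ s`, hence `s + a ≤ b + a ⊔ s`, which is `a ⊓ s ≤ b`. -/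

section
variable {G : Type*} [Lattice G] [AddCommGroup G] [AddLeftMono G]

theorem IsLUB.inf_left_image {S : Set G} {s : G} (hs : IsLUB S s) (a : G) :
    IsLUB ((a ⊓ ·) '' S) (a ⊓ s) := by
  refine ⟨(monotone_const.inf monotone_id).mem_upperBounds_image hs.1, fun b hb => ?_⟩
  have add_le_of_mem : ∀ y ∈ S, y + a ≤ b + a ⊔ s := fun y hy => calc
    y + a = a ⊓ y + a ⊔ y := by rw [inf_add_sup, add_comm]
    _ ≤ b + a ⊔ s := add_le_add (hb ⟨y, hy, rfl⟩) (sup_le_sup_left (hs.1 hy) a)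
  have hsb : s + a ≤ b + a ⊔ s :=
    le_sub_iff_add_le.mp <| hs.2 fun y hy => le_sub_iff_add_le.mpr (add_le_of_mem y hy)
  refine le_of_add_le_add_right (a := a ⊔ s) ?_
  rw [inf_add_sup, add_comm]
  exact hsb

end

theorem stmt2_general {G : Type*} [Lattice G] [AddCommGroup G]
    [CovariantClass G G (· + ·) (· ≤ ·)]
    {ι : Type*} (x : ι → G) (s : G)
    (hs : IsLUB (Set.range x) s) (a : G) :
    IsLUB (Set.range fun i => a ⊓ x i) (a ⊓ s) :=
  Set.range_comp (a ⊓ ·) x ▸ hs.inf_left_image a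

theorem stmt2 {G : Type*} [Lattice G] [AddCommGroup G]
    [CovariantClass G G (· + ·) (· ≤ ·)]
    {ι : Type*} [Nonempty ι] (x : ι → G) (s : G)
    (hs : IsLUB (Set.range x) s) (a : G) :
    IsLUB (Set.range fun i => a ⊓ x i) (a ⊓ s) :=
  stmt2_general x s hs a
end

section
/- Let G be an abelian lattice-ordered group equipped with an operation V(g, f) = ⋁^g_{n≥1} fₙ satisfying axioms (A1) ⋁^g fₙ = ⋁^g (fₙ ∧ g), (A2) ⋁^g_{n≥1} fₙ = (f₁ ∧ g) ∨ ⋁^g_{n≥2} fₙ, and (A3) ⋁^g_{n≥1}(fₙ ∧ h) ≤ h for all h. Then G is Dedekind σ-complete: every sequence in G bounded above by some g has a least upper bound, namely ⋁^g_{n≥1} fₙ. -/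
section SequentialSup

variable {G : Type*} (V : G → (ℕ → G) → G)

theorem inf_le_of_eq_inf_sup_tail [Lattice G]
    (hV : ∀ g : G, ∀ f : ℕ → G, V g f = (f 0 ⊓ g) ⊔ V g (fun n => f (n + 1)))
    (g : G) (f : ℕ → G) (n : ℕ) : f n ⊓ g ≤ V g f := by
  induction n generalizing f with
  | zero => exact hV g f ▸ le_sup_left
  | succ n ih => exact hV g f ▸ le_sup_of_le_right (ih fun k => f (k + 1))

theorem le_of_forall_le_of_le_inf [SemilatticeInf G]
    (hV : ∀ g h : G, ∀ f : ℕ → G, V g (fun n => f n ⊓ h) ≤ h)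
    (g h : G) (f : ℕ → G) (hf : ∀ n, f n ≤ h) : V g f ≤ h := by
  have hfh : (fun n => f n ⊓ h) = f := funext fun n => inf_eq_left.2 (hf n)
  simpa only [hfh] using hV g h f

end SequentialSup

theorem stmt19_general {G : Type*} [Lattice G]
    (V : G → (ℕ → G) → G)
    (A2 : ∀ g : G, ∀ f : ℕ → G, V g f = (f 0 ⊓ g) ⊔ V g (fun n => f (n + 1)))
    (A3 : ∀ g h : G, ∀ f : ℕ → G, V g (fun n => f n ⊓ h) ≤ h)
    (f : ℕ → G) (g : G) (hg : ∀ n, f n ≤ g) :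
    IsLUB (Set.range f) (V g f) := by
  constructor
  · rintro _ ⟨n, rfl⟩
    simpa only [inf_eq_left.2 (hg n)] using inf_le_of_eq_inf_sup_tail V A2 g f n
  · exact fun h hh => le_of_forall_le_of_le_inf V A3 g h f fun n => hh ⟨n, rfl⟩

theorem stmt19 {G : Type*} [Lattice G] [AddCommGroup G]
    [CovariantClass G G (· + ·) (· ≤ ·)]
    (V : G → (ℕ → G) → G)
    (A1 : ∀ g : G, ∀ f : ℕ → G, V g f = V g (fun n => f n ⊓ g))
    (A2 : ∀ g : G, ∀ f : ℕ → G, V g f = (f 0 ⊓ g) ⊔ V g (fun n => f (n + 1)))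
    (A3 : ∀ g h : G, ∀ f : ℕ → G, V g (fun n => f n ⊓ h) ≤ h)
    (f : ℕ → G) (g : G) (hg : ∀ n, f n ≤ g) :
    IsLUB (Set.range f) (V g f) :=
  stmt19_general V A2 A3 f g hg
end
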